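/- Let G be a strongly connected directed graph with n vertices and m edges, and fix α ∈ [0,1], an edge e = xy ∈ E, and constants Λ, δ > 0. Then there exists a constant C depending only on n, m, Λ, δ such that for any two weight vectors w^{(1)}, w^{(2)} with Λ^{-1} ≤ w_e^{(i)} ≤ Λ for all edges e and |w_e^{(1)} − w_e^{(2)}| ≤ δ for all e, the directed Wasserstein distances satisfy |W^{(1)}(μ_{x,α}^{out}, μ_{y,α}^{out}) − W^{(2)}(μ_{x,α}^{out}, μ_{y,α}^{out})| ≤ C · |w^{(1)} − w^{(2)}|. -/

import Mathlib

/-!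
Bounded weights make every distance at most `Λ N`, where `N` bounds the number of edges of some
path between any two vertices. Since `Λ⁻¹ ≤ w₂`, an additive perturbation `w₁ ≤ w₂ + ε` is a
multiplicative one `w₁ ≤ (1 + Λ ε) w₂`, so distances move by at most `Λ ε · Λ N`. The out-weights
are at least `Λ⁻¹`, so the lazy walks move by `O(ε)` in `ℓ¹`. Finally, the optimal transport cost is
Lipschitz in the cost (sup norm) and in the marginals (`ℓ¹`, with the diameter bound as constant):
a coupling of the old marginals is shrunk to a sub-coupling of the new ones whose missing mass is
at most their `ℓ¹` distance, and completed by the product of its defects. If a loop at an endpoint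
makes a lazy walk lose mass, it does so for both weights, and both distances are `sInf ∅ = 0`.
-/

open Finset

variable {V E : Type*}

/-- `p` is a directed path (list of edges) from `x` to `y`. -/
def IsPathFrom (src tgt : E → V) : V → V → List E → Prop
  | x, y, [] => x = y
  | x, y, e :: p => src e = x ∧ IsPathFrom src tgt (tgt e) y p

/-- Total weight of a path. -/
def pathWeight (w : E → ℝ) (p : List E) : ℝ := (p.map w).sum

/-- Directed shortest-path distance induced by weights `w`. -/
noncomputable def gdist (src tgt : E → V) (w : E → ℝ) (x y : V) : ℝ :=
  sInf {c : ℝ | ∃ p : List E, IsPathFrom src tgt x y p ∧ c = pathWeight w p}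

/-- A directed graph is strongly connected if any vertex can reach any other. -/
def StronglyConnected (src tgt : E → V) : Prop :=
  ∀ x y : V, ∃ p : List E, IsPathFrom src tgt x y p

/-- Total weight of edges going out of `x`. -/
def outWeight [Fintype E] [DecidableEq V] (src : E → V) (w : E → ℝ) (x : V) : ℝ :=
  ∑ e : E, if src e = x then w e else 0

/-- The outward `α`-lazy one-step random walk at `x`. -/
noncomputable def lazyWalk [Fintype E] [DecidableEq V] (src tgt : E → V) (w : E → ℝ)
    (α : ℝ) (x z : V) : ℝ :=
  if z = x then α
  else (1 - α) * (∑ e : E, if src e = x ∧ tgt e = z then w e else 0) / outWeight src w x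

/-- `A` is a coupling between the probability measures `μ₁` and `μ₂`. -/
def IsCoupling [Fintype V] (μ₁ μ₂ : V → ℝ) (A : V → V → ℝ) : Prop :=
  (∀ u v, 0 ≤ A u v) ∧ (∀ u, ∑ v, A u v = μ₁ u) ∧ (∀ v, ∑ u, A u v = μ₂ v) ∧
    ∑ u, ∑ v, A u v = 1

/-- The directed Wasserstein distance from `μ₁` to `μ₂`. -/
noncomputable def wasserstein [Fintype V] (src tgt : E → V) (w : E → ℝ) (μ₁ μ₂ : V → ℝ) : ℝ :=
  sInf {c : ℝ | ∃ A : V → V → ℝ, IsCoupling μ₁ μ₂ A ∧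
    c = ∑ u, ∑ v, A u v * gdist src tgt w u v}

/-- The directed Ollivier-type Ricci curvature of the edge `e`. -/
noncomputable def ricci [Fintype V] [Fintype E] [DecidableEq V] (src tgt : E → V)
    (w : E → ℝ) (α : ℝ) (e : E) : ℝ :=
  1 - wasserstein src tgt w (lazyWalk src tgt w α (src e)) (lazyWalk src tgt w α (tgt e)) /
      gdist src tgt w (src e) (tgt e)

/-- Euclidean norm of a weight vector. -/
noncomputable def enorm [Fintype E] (u : E → ℝ) : ℝ := Real.sqrt (∑ e : E, (u e) ^ 2)

lemma abs_div_sub_div_le {a₁ a₂ b₁ b₂ : ℝ} (hb₁ : 0 < b₁) (hb₂ : 0 < b₂) (ha₂ : 0 ≤ a₂)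
    (ha₂b₂ : a₂ ≤ b₂) : |a₁ / b₁ - a₂ / b₂| ≤ (|a₁ - a₂| + |b₁ - b₂|) / b₁ := by
  have hsplit : a₁ / b₁ - a₂ / b₂ = ((a₁ - a₂) - a₂ / b₂ * (b₁ - b₂)) / b₁ := by
    field_simp
    ring
  have hratio : |a₂ / b₂| ≤ 1 := by
    rw [abs_of_nonneg (by positivity)]
    exact div_le_one_of_le₀ ha₂b₂ hb₂.le
  rw [hsplit, abs_div, abs_of_pos hb₁]
  gcongr
  calc |a₁ - a₂ - a₂ / b₂ * (b₁ - b₂)| ≤ |a₁ - a₂| + |a₂ / b₂ * (b₁ - b₂)| := abs_sub _ _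
    _ ≤ |a₁ - a₂| + |b₁ - b₂| := by
      rw [abs_mul]
      gcongr
      exact mul_le_of_le_one_left (abs_nonneg _) hratio

lemma mul_min_div_one {a b : ℝ} (ha : 0 ≤ a) (hb : 0 ≤ b) : b * min (a / b) 1 = min a b := by
  rcases hb.eq_or_lt with rfl | hb
  · simp [ha]
  · rw [mul_min_of_nonneg _ _ hb.le, mul_div_cancel₀ _ hb.ne', mul_one]

lemma sub_min_le_abs_sub (a b : ℝ) : b - min a b ≤ |a - b| := by
  rw [← max_sub_min_eq_abs']
  exact sub_le_sub_right (le_max_right a b) _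

lemma abs_apply_le_enorm [Fintype E] (u : E → ℝ) (τ : E) : |u τ| ≤ _root_.enorm u := by
  rw [_root_.enorm, ← Real.sqrt_sq_eq_abs]
  exact Real.sqrt_le_sqrt (single_le_sum (fun e _ => sq_nonneg (u e)) (mem_univ τ))

section Paths

variable (src tgt : E → V)

@[simp]
lemma pathWeight_nil (w : E → ℝ) : pathWeight w [] = 0 := rfl

@[simp]
lemma pathWeight_cons (w : E → ℝ) (e : E) (p : List E) :
    pathWeight w (e :: p) = w e + pathWeight w p := by
  simp [pathWeight]

lemma pathWeight_nonneg {w : E → ℝ} (hw : ∀ e, 0 ≤ w e) (p : List E) : 0 ≤ pathWeight w p :=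
  List.sum_nonneg (by simpa using fun e _ => hw e)

lemma pathWeight_le_mul_length {w : E → ℝ} {c : ℝ} (hw : ∀ e, w e ≤ c) (p : List E) :
    pathWeight w p ≤ c * p.length := by
  induction p with
  | nil => simp
  | cons e p ih => simp only [pathWeight_cons, List.length_cons]; push_cast; linarith [hw e]

lemma pathWeight_le_mul {w₁ w₂ : E → ℝ} {c : ℝ} (hw : ∀ e, w₁ e ≤ c * w₂ e) (p : List E) :
    pathWeight w₁ p ≤ c * pathWeight w₂ p := by
  induction p with
  | nil => simp
  | cons e p ih => simp only [pathWeight_cons]; linarith [hw e]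

lemma gdist_le_pathWeight {w : E → ℝ} (hw : ∀ e, 0 ≤ w e) {x y : V} {p : List E}
    (hp : IsPathFrom src tgt x y p) : gdist src tgt w x y ≤ pathWeight w p :=
  csInf_le ⟨0, by rintro _ ⟨q, -, rfl⟩; exact pathWeight_nonneg hw q⟩ ⟨p, hp, rfl⟩

lemma gdist_nonneg {w : E → ℝ} (hw : ∀ e, 0 ≤ w e) (x y : V) : 0 ≤ gdist src tgt w x y :=
  Real.sInf_nonneg (by rintro _ ⟨p, -, rfl⟩; exact pathWeight_nonneg hw p)

lemma gdist_le_mul_gdist {w₁ w₂ : E → ℝ} {c : ℝ} (hc : 0 < c) (hw₁ : ∀ e, 0 ≤ w₁ e)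
    (hw : ∀ e, w₁ e ≤ c * w₂ e) {x y : V} (hxy : ∃ p, IsPathFrom src tgt x y p) :
    gdist src tgt w₁ x y ≤ c * gdist src tgt w₂ x y := by
  obtain ⟨p, hp⟩ := hxy
  rw [← div_le_iff₀' hc]
  refine le_csInf ⟨_, p, hp, rfl⟩ ?_
  rintro _ ⟨q, hq, rfl⟩
  rw [div_le_iff₀' hc]
  exact (gdist_le_pathWeight src tgt hw₁ hq).trans (pathWeight_le_mul hw q)

lemma gdist_sub_le {w₁ w₂ : E → ℝ} {Λ ε : ℝ} (hΛ : 0 < Λ) (hε : 0 ≤ ε) (hw₁ : ∀ e, 0 ≤ w₁ e)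
    (hw₂ : ∀ e, Λ⁻¹ ≤ w₂ e) (hw : ∀ e, w₁ e ≤ w₂ e + ε) {x y : V}
    (hxy : ∃ p, IsPathFrom src tgt x y p) :
    gdist src tgt w₁ x y - gdist src tgt w₂ x y ≤ Λ * ε * gdist src tgt w₂ x y := by
  have hmul : ∀ e, w₁ e ≤ (1 + Λ * ε) * w₂ e := fun e => by
    have : 1 ≤ Λ * w₂ e := (inv_le_iff_one_le_mul₀' hΛ).1 (hw₂ e)
    nlinarith [hw e]
  linarith [gdist_le_mul_gdist src tgt (by positivity) hw₁ hmul hxy]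

lemma abs_gdist_sub_le {w₁ w₂ : E → ℝ} {Λ ε B : ℝ} (hΛ : 0 < Λ) (hε : 0 ≤ ε)
    (hw₁ : ∀ e, Λ⁻¹ ≤ w₁ e) (hw₂ : ∀ e, Λ⁻¹ ≤ w₂ e) (hw : ∀ e, |w₁ e - w₂ e| ≤ ε) {x y : V}
    (hxy : ∃ p, IsPathFrom src tgt x y p) (hB₁ : gdist src tgt w₁ x y ≤ B)
    (hB₂ : gdist src tgt w₂ x y ≤ B) :
    |gdist src tgt w₁ x y - gdist src tgt w₂ x y| ≤ Λ * ε * B := by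
  have hnonneg : ∀ {w : E → ℝ}, (∀ e, Λ⁻¹ ≤ w e) → ∀ e, 0 ≤ w e :=
    fun hw e => (inv_pos.2 hΛ).le.trans (hw e)
  have h₁₂ := gdist_sub_le src tgt hΛ hε (hnonneg hw₁) hw₂
    (fun e => by linarith [le_abs_self (w₁ e - w₂ e), hw e]) hxy
  have h₂₁ := gdist_sub_le src tgt hΛ hε (hnonneg hw₂) hw₁
    (fun e => by linarith [neg_abs_le (w₁ e - w₂ e), hw e]) hxy
  have hΛε : 0 ≤ Λ * ε := by positivity
  rw [abs_sub_le_iff]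
  constructor <;> nlinarith

variable {src tgt}

lemma StronglyConnected.exists_forall_gdist_le [Fintype V] (hsc : StronglyConnected src tgt) :
    ∃ N : ℕ, ∀ {w : E → ℝ} {Λ : ℝ}, 0 ≤ Λ → (∀ e, 0 ≤ w e) → (∀ e, w e ≤ Λ) →
      ∀ x y, gdist src tgt w x y ≤ Λ * N := by
  choose path hpath using hsc
  refine ⟨univ.sup fun xy : V × V => (path xy.1 xy.2).length, fun hΛ hw₀ hwΛ x y => ?_⟩
  calc gdist src tgt _ x y ≤ _ * (path x y).length :=
        (gdist_le_pathWeight src tgt hw₀ (hpath x y)).trans (pathWeight_le_mul_length hwΛ _)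
    _ ≤ _ := by
        gcongr
        exact le_sup (f := fun xy : V × V => (path xy.1 xy.2).length) (mem_univ (x, y))

lemma StronglyConnected.exists_src_eq_tgt (hsc : StronglyConnected src tgt) (e : E) :
    ∃ e', src e' = tgt e := by
  obtain ⟨p, hp⟩ := hsc (tgt e) (src e)
  cases p with
  | nil => exact ⟨e, hp.symm⟩
  | cons e' _ => exact ⟨e', hp.1⟩

end Paths

section SumIte

variable [Fintype E]

lemma sum_ite_nonneg {w : E → ℝ} (hw : ∀ e, 0 ≤ w e) (P : E → Prop) [DecidablePred P] :
    0 ≤ ∑ e, if P e then w e else 0 :=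
  sum_nonneg fun e _ => by split_ifs <;> simp [hw e]

lemma abs_sum_ite_sub_le {w₁ w₂ : E → ℝ} {ε : ℝ} (hw : ∀ e, |w₁ e - w₂ e| ≤ ε)
    (P : E → Prop) [DecidablePred P] :
    |(∑ e, if P e then w₁ e else 0) - ∑ e, if P e then w₂ e else 0| ≤ Fintype.card E * ε := by
  have hterm : ∀ e, |(if P e then w₁ e else 0) - if P e then w₂ e else 0| ≤ ε := fun e => by
    split_ifs
    · exact hw e
    · simpa using (abs_nonneg _).trans (hw e)
  rw [← sum_sub_distrib]
  refine (abs_sum_le_sum_abs _ _).trans ?_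
  simpa using sum_le_sum fun e (_ : e ∈ univ) => hterm e

end SumIte

section LazyWalk

variable [Fintype E] [DecidableEq V] (src tgt : E → V)

def edgeWeight (w : E → ℝ) (x z : V) : ℝ := ∑ e, if src e = x ∧ tgt e = z then w e else 0

lemma lazyWalk_self (w : E → ℝ) (α : ℝ) (x : V) : lazyWalk src tgt w α x x = α :=
  if_pos rfl

lemma lazyWalk_of_ne {w : E → ℝ} {α : ℝ} {x z : V} (hz : z ≠ x) :
    lazyWalk src tgt w α x z = (1 - α) * (edgeWeight src tgt w x z / outWeight src w x) := by
  rw [lazyWalk, if_neg hz, mul_div_assoc]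
  rfl

lemma sum_edgeWeight [Fintype V] (w : E → ℝ) (x : V) :
    ∑ z, edgeWeight src tgt w x z = outWeight src w x := by
  simp only [edgeWeight]
  rw [sum_comm]
  refine sum_congr rfl fun e _ => ?_
  by_cases h : src e = x <;> simp [h]

lemma edgeWeight_le_outWeight {w : E → ℝ} (hw : ∀ e, 0 ≤ w e) (x z : V) :
    edgeWeight src tgt w x z ≤ outWeight src w x :=
  sum_le_sum fun e _ => by by_cases h : src e = x <;> split_ifs <;> simp_all

lemma le_outWeight {w : E → ℝ} (hw : ∀ e, 0 ≤ w e) {x : V} {e₀ : E} (he₀ : src e₀ = x) :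
    w e₀ ≤ outWeight src w x := by
  simpa [he₀, outWeight] using single_le_sum (f := fun e => if src e = x then w e else 0)
    (fun e _ => by split_ifs <;> simp [hw e]) (mem_univ e₀)

lemma lazyWalk_nonneg {w : E → ℝ} (hw : ∀ e, 0 ≤ w e) {α : ℝ} (hα : α ∈ Set.Icc (0 : ℝ) 1)
    (x z : V) : 0 ≤ lazyWalk src tgt w α x z := by
  by_cases hz : z = x
  · rw [hz, lazyWalk_self]
    exact hα.1
  · rw [lazyWalk_of_ne src tgt hz]
    exact mul_nonneg (by linarith [hα.2]) (div_nonneg (sum_ite_nonneg hw _) (sum_ite_nonneg hw _))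

lemma sum_lazyWalk [Fintype V] (w : E → ℝ) (α : ℝ) (x : V) :
    ∑ z, lazyWalk src tgt w α x z =
      α + (1 - α) * ((outWeight src w x - edgeWeight src tgt w x x) / outWeight src w x) := by
  have hoff : outWeight src w x - edgeWeight src tgt w x x =
      ∑ z ∈ univ.erase x, edgeWeight src tgt w x z := by
    rw [← sum_edgeWeight, ← add_sum_erase _ _ (mem_univ x), add_sub_cancel_left]
  rw [hoff, sum_div, mul_sum, ← add_sum_erase _ _ (mem_univ x)]
  congr 1
  · exact lazyWalk_self src tgt w α x
  · exact sum_congr rfl fun z hz => lazyWalk_of_ne src tgt (ne_of_mem_erase hz)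

/-- Loops at `x` count in `outWeight` but their mass is overwritten by `α`, so the walk misses
`(1 - α)` times their relative weight. -/
lemma lazyWalk_mem_stdSimplex_iff [Fintype V] {w : E → ℝ} (hw : ∀ e, 0 < w e) {α : ℝ}
    (hα : α ∈ Set.Icc (0 : ℝ) 1) {x : V} {e₀ : E} (he₀ : src e₀ = x) :
    lazyWalk src tgt w α x ∈ stdSimplex ℝ V ↔ α = 1 ∨ ∀ e, src e = x → tgt e ≠ x := by
  have hO : outWeight src w x ≠ 0 :=
    ((hw e₀).trans_le (le_outWeight src (fun e => (hw e).le) he₀)).ne'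
  have hloop : edgeWeight src tgt w x x = 0 ↔ ∀ e, src e = x → tgt e ≠ x := by
    rw [edgeWeight, sum_eq_zero_iff_of_nonneg fun e _ => by split_ifs <;> simp [(hw e).le]]
    simp [(hw _).ne']
  have hsum : α + (1 - α) * ((outWeight src w x - edgeWeight src tgt w x x) / outWeight src w x)
      = 1 - (1 - α) * edgeWeight src tgt w x x / outWeight src w x := by
    field_simp
    ring
  rw [stdSimplex, Set.mem_ofPred_eq, and_iff_right fun z => lazyWalk_nonneg src tgt
    (fun e => (hw e).le) hα x z, sum_lazyWalk, hsum, sub_eq_self, div_eq_zero_iff, or_iff_left hO,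
    mul_eq_zero, sub_eq_zero, eq_comm, hloop]

lemma lazyWalk_mem_stdSimplex_congr [Fintype V] {w₁ w₂ : E → ℝ} (hw₁ : ∀ e, 0 < w₁ e)
    (hw₂ : ∀ e, 0 < w₂ e) {α : ℝ} (hα : α ∈ Set.Icc (0 : ℝ) 1) {x : V} {e₀ : E}
    (he₀ : src e₀ = x) :
    lazyWalk src tgt w₁ α x ∈ stdSimplex ℝ V ↔ lazyWalk src tgt w₂ α x ∈ stdSimplex ℝ V := by
  rw [lazyWalk_mem_stdSimplex_iff src tgt hw₁ hα he₀,
    lazyWalk_mem_stdSimplex_iff src tgt hw₂ hα he₀]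

lemma abs_lazyWalk_sub_le {w₁ w₂ : E → ℝ} {α Λ ε : ℝ} (hΛ : 0 < Λ) (hα : α ∈ Set.Icc (0 : ℝ) 1)
    (hw₁ : ∀ e, Λ⁻¹ ≤ w₁ e) (hw₂ : ∀ e, Λ⁻¹ ≤ w₂ e) (hw : ∀ e, |w₁ e - w₂ e| ≤ ε) {x : V}
    {e₀ : E} (he₀ : src e₀ = x) (z : V) :
    |lazyWalk src tgt w₁ α x z - lazyWalk src tgt w₂ α x z| ≤ 2 * Fintype.card E * Λ * ε := by
  have hε : 0 ≤ ε := (abs_nonneg _).trans (hw e₀)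
  by_cases hz : z = x
  · rw [hz, lazyWalk_self, lazyWalk_self, sub_self, abs_zero]
    positivity
  have hΛinv : 0 < Λ⁻¹ := inv_pos.2 hΛ
  have hw₁₀ : ∀ e, 0 ≤ w₁ e := fun e => hΛinv.le.trans (hw₁ e)
  have hw₂₀ : ∀ e, 0 ≤ w₂ e := fun e => hΛinv.le.trans (hw₂ e)
  have hO₁ : Λ⁻¹ ≤ outWeight src w₁ x := (hw₁ e₀).trans (le_outWeight src hw₁₀ he₀)
  have hO₂ : Λ⁻¹ ≤ outWeight src w₂ x := (hw₂ e₀).trans (le_outWeight src hw₂₀ he₀)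
  have hratio := abs_div_sub_div_le (a₁ := edgeWeight src tgt w₁ x z) (hΛinv.trans_le hO₁)
    (hΛinv.trans_le hO₂) (sum_ite_nonneg hw₂₀ _) (edgeWeight_le_outWeight src tgt hw₂₀ x z)
  rw [lazyWalk_of_ne src tgt hz, lazyWalk_of_ne src tgt hz, ← mul_sub, abs_mul,
    abs_of_nonneg (by linarith [hα.2])]
  calc (1 - α) * |edgeWeight src tgt w₁ x z / outWeight src w₁ x -
        edgeWeight src tgt w₂ x z / outWeight src w₂ x|
      ≤ 1 * ((Fintype.card E * ε + Fintype.card E * ε) / Λ⁻¹) := by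
        gcongr
        · linarith [hα.1]
        · refine hratio.trans ?_
          gcongr
          · exact abs_sum_ite_sub_le hw _
          · exact abs_sum_ite_sub_le hw _
    _ = 2 * Fintype.card E * Λ * ε := by field_simp; ring

lemma sum_abs_lazyWalk_sub_le [Fintype V] {w₁ w₂ : E → ℝ} {α Λ ε : ℝ} (hΛ : 0 < Λ)
    (hα : α ∈ Set.Icc (0 : ℝ) 1) (hw₁ : ∀ e, Λ⁻¹ ≤ w₁ e) (hw₂ : ∀ e, Λ⁻¹ ≤ w₂ e)
    (hw : ∀ e, |w₁ e - w₂ e| ≤ ε) {x : V} {e₀ : E} (he₀ : src e₀ = x) :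
    ∑ z, |lazyWalk src tgt w₁ α x z - lazyWalk src tgt w₂ α x z| ≤
      Fintype.card V * (2 * Fintype.card E * Λ * ε) := by
  simpa using sum_le_card_nsmul univ _ _ fun z _ =>
    abs_lazyWalk_sub_le src tgt hΛ hα hw₁ hw₂ hw he₀ z

end LazyWalk

section Transport

variable [Fintype V]

noncomputable def optimalTransportCost (d : V → V → ℝ) (μ ν : V → ℝ) : ℝ :=
  sInf {c : ℝ | ∃ A : V → V → ℝ, IsCoupling μ ν A ∧ c = ∑ u, ∑ v, A u v * d u v}

lemma wasserstein_eq_optimalTransportCost (src tgt : E → V) (w : E → ℝ) (μ ν : V → ℝ) :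
    wasserstein src tgt w μ ν = optimalTransportCost (gdist src tgt w) μ ν := rfl

variable {μ ν : V → ℝ} {d : V → V → ℝ}

lemma IsCoupling.left_mem_stdSimplex {A : V → V → ℝ} (hA : IsCoupling μ ν A) :
    μ ∈ stdSimplex ℝ V :=
  ⟨fun u => hA.2.1 u ▸ sum_nonneg fun v _ => hA.1 u v, by simp_rw [← hA.2.1]; exact hA.2.2.2⟩

lemma IsCoupling.right_mem_stdSimplex {A : V → V → ℝ} (hA : IsCoupling μ ν A) :
    ν ∈ stdSimplex ℝ V :=
  ⟨fun v => hA.2.2.1 v ▸ sum_nonneg fun u _ => hA.1 u v,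
    by simp_rw [← hA.2.2.1]; rw [sum_comm]; exact hA.2.2.2⟩

lemma isCoupling_mul (hμ : μ ∈ stdSimplex ℝ V) (hν : ν ∈ stdSimplex ℝ V) :
    IsCoupling μ ν fun u v => μ u * ν v :=
  ⟨fun u v => mul_nonneg (hμ.1 u) (hν.1 v), fun u => by rw [← mul_sum, hν.2, mul_one],
    fun v => by rw [← sum_mul, hμ.2, one_mul], by simp_rw [← mul_sum, hν.2, mul_one, hμ.2]⟩

lemma optimalTransportCost_eq_zero (h : ¬(μ ∈ stdSimplex ℝ V ∧ ν ∈ stdSimplex ℝ V)) :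
    optimalTransportCost d μ ν = 0 := by
  have hempty : {c : ℝ | ∃ A : V → V → ℝ, IsCoupling μ ν A ∧ c = ∑ u, ∑ v, A u v * d u v} = ∅ :=
    Set.eq_empty_iff_forall_notMem.2 fun _ ⟨_, hA, _⟩ =>
      h ⟨hA.left_mem_stdSimplex, hA.right_mem_stdSimplex⟩
  rw [optimalTransportCost, hempty, Real.sInf_empty]

lemma optimalTransportCost_le {A : V → V → ℝ} (hd : ∀ u v, 0 ≤ d u v) (hA : IsCoupling μ ν A) :
    optimalTransportCost d μ ν ≤ ∑ u, ∑ v, A u v * d u v :=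
  csInf_le ⟨0, by
    rintro _ ⟨A', hA', rfl⟩
    exact sum_nonneg fun u _ => sum_nonneg fun v _ => mul_nonneg (hA'.1 u v) (hd u v)⟩ ⟨A, hA, rfl⟩

/-- Completing a sub-coupling `A₀` by the normalized product of its row and column defects. -/
lemma exists_isCoupling_cost_le_add_defect (hμ : μ ∈ stdSimplex ℝ V) (hν : ν ∈ stdSimplex ℝ V)
    {A₀ : V → V → ℝ} (hA₀ : ∀ u v, 0 ≤ A₀ u v) (hrow : ∀ u, ∑ v, A₀ u v ≤ μ u)
    (hcol : ∀ v, ∑ u, A₀ u v ≤ ν v) {B : ℝ} (hdB : ∀ u v, d u v ≤ B) :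
    ∃ A, IsCoupling μ ν A ∧
      ∑ u, ∑ v, A u v * d u v ≤ ∑ u, ∑ v, A₀ u v * d u v + (1 - ∑ u, ∑ v, A₀ u v) * B := by
  set p : V → ℝ := fun u => μ u - ∑ v, A₀ u v
  set q : V → ℝ := fun v => ν v - ∑ u, A₀ u v
  set t := 1 - ∑ u, ∑ v, A₀ u v
  have hp : ∀ u, 0 ≤ p u := fun u => sub_nonneg.2 (hrow u)
  have hq : ∀ v, 0 ≤ q v := fun v => sub_nonneg.2 (hcol v)
  have hsum_p : ∑ u, p u = t := by simp only [p, t, sum_sub_distrib, hμ.2]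
  have hsum_q : ∑ v, q v = t := by simp only [q, t, sum_sub_distrib, hν.2]; rw [sum_comm]
  have ht : 0 ≤ t := hsum_p ▸ sum_nonneg fun u _ => hp u
  have hp_zero : t = 0 → ∀ u, p u = 0 := fun h u =>
    (sum_eq_zero_iff_of_nonneg fun u _ => hp u).1 (hsum_p.trans h) u (mem_univ u)
  have hq_zero : t = 0 → ∀ v, q v = 0 := fun h v =>
    (sum_eq_zero_iff_of_nonneg fun v _ => hq v).1 (hsum_q.trans h) v (mem_univ v)
  have hrow' : ∀ u, ∑ v, (A₀ u v + p u * q v / t) = μ u := fun u => by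
    rw [sum_add_distrib, ← sum_div, ← mul_sum, hsum_q,
      mul_div_cancel_of_imp fun h => hp_zero h u]
    ring
  have hcol' : ∀ v, ∑ u, (A₀ u v + p u * q v / t) = ν v := fun v => by
    rw [sum_add_distrib, ← sum_div, ← sum_mul, hsum_p,
      mul_div_cancel_left_of_imp fun h => hq_zero h v]
    ring
  refine ⟨fun u v => A₀ u v + p u * q v / t,
    ⟨fun u v => add_nonneg (hA₀ u v) (div_nonneg (mul_nonneg (hp u) (hq v)) ht), hrow', hcol',
      by simp_rw [hrow', hμ.2]⟩, ?_⟩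
  have hdefect : ∑ u, ∑ v, p u * q v / t * d u v ≤ t * B :=
    calc ∑ u, ∑ v, p u * q v / t * d u v ≤ ∑ u, ∑ v, p u * q v / t * B := by
          gcongr with u _ v _
          · exact div_nonneg (mul_nonneg (hp u) (hq v)) ht
          · exact hdB u v
      _ = t * B := by
          simp_rw [← sum_mul, ← sum_div, ← mul_sum, hsum_q, ← sum_mul, hsum_p, mul_self_div_self]
  simp only [add_mul, sum_add_distrib]
  linarith

/-- Scaling a coupling of `(μ', ν')` by `min (μ / μ') 1 ⊗ min (ν / ν') 1` gives a sub-coupling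
of `(μ, ν)` whose missing mass is at most the `ℓ¹` distance between the marginals. -/
lemma exists_isCoupling_cost_le (hμ : μ ∈ stdSimplex ℝ V) (hν : ν ∈ stdSimplex ℝ V)
    (hd : ∀ u v, 0 ≤ d u v) {B : ℝ} (hdB : ∀ u v, d u v ≤ B) (hB : 0 ≤ B)
    {μ' ν' : V → ℝ} {A' : V → V → ℝ} (hA' : IsCoupling μ' ν' A') :
    ∃ A, IsCoupling μ ν A ∧ ∑ u, ∑ v, A u v * d u v ≤
      ∑ u, ∑ v, A' u v * d u v + ((∑ u, |μ u - μ' u|) + ∑ v, |ν v - ν' v|) * B := by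
  have hμ' := hA'.left_mem_stdSimplex
  have hν' := hA'.right_mem_stdSimplex
  obtain ⟨hA'₀, hrow', hcol', htot'⟩ := hA'
  set θ : V → ℝ := fun u => min (μ u / μ' u) 1
  set η : V → ℝ := fun v => min (ν v / ν' v) 1
  have hθ₀ : ∀ u, 0 ≤ θ u := fun u => le_min (div_nonneg (hμ.1 u) (hμ'.1 u)) zero_le_one
  have hη₀ : ∀ v, 0 ≤ η v := fun v => le_min (div_nonneg (hν.1 v) (hν'.1 v)) zero_le_one
  have hθ₁ : ∀ u, θ u ≤ 1 := fun u => min_le_right _ _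
  have hη₁ : ∀ v, η v ≤ 1 := fun v => min_le_right _ _
  have hμθ : ∀ u, μ' u * θ u = min (μ u) (μ' u) := fun u => mul_min_div_one (hμ.1 u) (hμ'.1 u)
  have hνη : ∀ v, ν' v * η v = min (ν v) (ν' v) := fun v => mul_min_div_one (hν.1 v) (hν'.1 v)
  set A₀ : V → V → ℝ := fun u v => A' u v * (θ u * η v)
  have hA₀ : ∀ u v, 0 ≤ A₀ u v := fun u v => mul_nonneg (hA'₀ u v) (mul_nonneg (hθ₀ u) (hη₀ v))
  have hA₀A' : ∀ u v, A₀ u v ≤ A' u v := fun u v =>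
    mul_le_of_le_one_right (hA'₀ u v) (mul_le_one₀ (hθ₁ u) (hη₀ v) (hη₁ v))
  have hrow : ∀ u, ∑ v, A₀ u v ≤ μ u := fun u =>
    calc ∑ v, A₀ u v ≤ ∑ v, A' u v * θ u := by
          gcongr with v
          exact mul_le_mul_of_nonneg_left (mul_le_of_le_one_right (hθ₀ u) (hη₁ v)) (hA'₀ u v)
      _ ≤ μ u := by rw [← sum_mul, hrow', hμθ]; exact min_le_left _ _
  have hcol : ∀ v, ∑ u, A₀ u v ≤ ν v := fun v =>
    calc ∑ u, A₀ u v ≤ ∑ u, A' u v * η v := by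
          gcongr with u
          exact mul_le_mul_of_nonneg_left (mul_le_of_le_one_left (hη₀ v) (hθ₁ u)) (hA'₀ u v)
      _ ≤ ν v := by rw [← sum_mul, hcol', hνη]; exact min_le_left _ _
  have hmissing : 1 - ∑ u, ∑ v, A₀ u v ≤ (∑ u, |μ u - μ' u|) + ∑ v, |ν v - ν' v| :=
    calc 1 - ∑ u, ∑ v, A₀ u v = ∑ u, ∑ v, A' u v * (1 - θ u * η v) := by
          simp only [A₀, mul_sub, mul_one, sum_sub_distrib, htot']
      _ ≤ ∑ u, ∑ v, (A' u v * (1 - θ u) + A' u v * (1 - η v)) := by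
          gcongr with u _ v _
          rw [← mul_add]
          exact mul_le_mul_of_nonneg_left
            (by nlinarith [mul_nonneg (sub_nonneg.2 (hθ₁ u)) (sub_nonneg.2 (hη₁ v))]) (hA'₀ u v)
      _ = ∑ u, (μ' u - min (μ u) (μ' u)) + ∑ v, (ν' v - min (ν v) (ν' v)) := by
          rw [sum_congr rfl fun u _ => sum_add_distrib, sum_add_distrib,
            sum_comm (f := fun u v => A' u v * (1 - η v))]
          simp_rw [← sum_mul, hrow', hcol', mul_sub, mul_one, hμθ, hνη]
      _ ≤ (∑ u, |μ u - μ' u|) + ∑ v, |ν v - ν' v| := by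
          gcongr with u _ v _
          · exact sub_min_le_abs_sub _ _
          · exact sub_min_le_abs_sub _ _
  obtain ⟨A, hA, hcost⟩ := exists_isCoupling_cost_le_add_defect hμ hν hA₀ hrow hcol hdB
  refine ⟨A, hA, hcost.trans (add_le_add ?_ (mul_le_mul_of_nonneg_right hmissing hB))⟩
  gcongr with u _ v _
  · exact hd u v
  · exact hA₀A' u v

lemma optimalTransportCost_le_add {d₁ d₂ : V → V → ℝ} {μ₁ ν₁ μ₂ ν₂ : V → ℝ} {B D : ℝ}
    (hμ₁ : μ₁ ∈ stdSimplex ℝ V) (hν₁ : ν₁ ∈ stdSimplex ℝ V) (hμ₂ : μ₂ ∈ stdSimplex ℝ V)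
    (hν₂ : ν₂ ∈ stdSimplex ℝ V) (hd₁ : ∀ u v, 0 ≤ d₁ u v) (hd₁B : ∀ u v, d₁ u v ≤ B) (hB : 0 ≤ B)
    (hd : ∀ u v, d₁ u v ≤ d₂ u v + D) :
    optimalTransportCost d₁ μ₁ ν₁ ≤ optimalTransportCost d₂ μ₂ ν₂ + D +
      ((∑ u, |μ₁ u - μ₂ u|) + ∑ v, |ν₁ v - ν₂ v|) * B := by
  rw [add_assoc, ← sub_le_iff_le_add]
  refine le_csInf ⟨_, _, isCoupling_mul hμ₂ hν₂, rfl⟩ ?_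
  rintro _ ⟨A₂, hA₂, rfl⟩
  obtain ⟨A, hA, hcost⟩ := exists_isCoupling_cost_le hμ₁ hν₁ hd₁ hd₁B hB hA₂
  have hmetric : ∑ u, ∑ v, A₂ u v * d₁ u v ≤ ∑ u, ∑ v, A₂ u v * d₂ u v + D :=
    calc ∑ u, ∑ v, A₂ u v * d₁ u v ≤ ∑ u, ∑ v, A₂ u v * (d₂ u v + D) := by
          gcongr with u _ v _
          · exact hA₂.1 u v
          · exact hd u v
      _ = ∑ u, ∑ v, A₂ u v * d₂ u v + D := by
          simp_rw [mul_add, sum_add_distrib, ← sum_mul, hA₂.2.2.2, one_mul]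
  linarith [optimalTransportCost_le hd₁ hA]

lemma abs_optimalTransportCost_sub_le {d₁ d₂ : V → V → ℝ} {μ₁ ν₁ μ₂ ν₂ : V → ℝ} {B D L : ℝ}
    (hd₁ : ∀ u v, 0 ≤ d₁ u v ∧ d₁ u v ≤ B) (hd₂ : ∀ u v, 0 ≤ d₂ u v ∧ d₂ u v ≤ B) (hB : 0 ≤ B)
    (hD : 0 ≤ D) (hd : ∀ u v, |d₁ u v - d₂ u v| ≤ D)
    (hS : μ₁ ∈ stdSimplex ℝ V ∧ ν₁ ∈ stdSimplex ℝ V ↔ μ₂ ∈ stdSimplex ℝ V ∧ ν₂ ∈ stdSimplex ℝ V)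
    (hμ : ∑ u, |μ₁ u - μ₂ u| ≤ L) (hν : ∑ v, |ν₁ v - ν₂ v| ≤ L) :
    |optimalTransportCost d₁ μ₁ ν₁ - optimalTransportCost d₂ μ₂ ν₂| ≤ D + 2 * L * B := by
  by_cases h₂ : μ₂ ∈ stdSimplex ℝ V ∧ ν₂ ∈ stdSimplex ℝ V
  · obtain ⟨hμ₁, hν₁⟩ := hS.2 h₂
    have h₁₂ := optimalTransportCost_le_add hμ₁ hν₁ h₂.1 h₂.2 (fun u v => (hd₁ u v).1)
      (fun u v => (hd₁ u v).2) hB fun u v => sub_le_iff_le_add'.1 (abs_sub_le_iff.1 (hd u v)).1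
    have h₂₁ := optimalTransportCost_le_add h₂.1 h₂.2 hμ₁ hν₁ (fun u v => (hd₂ u v).1)
      (fun u v => (hd₂ u v).2) hB fun u v => sub_le_iff_le_add'.1 (abs_sub_le_iff.1 (hd u v)).2
    simp_rw [abs_sub_comm (μ₂ _), abs_sub_comm (ν₂ _)] at h₂₁
    have hLB : ((∑ u, |μ₁ u - μ₂ u|) + ∑ v, |ν₁ v - ν₂ v|) * B ≤ 2 * L * B := by nlinarith
    rw [abs_sub_le_iff]
    constructor <;> linarith
  · rw [optimalTransportCost_eq_zero h₂, optimalTransportCost_eq_zero (mt hS.1 h₂), sub_zero,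
      abs_zero]
    have : 0 ≤ L := (sum_nonneg fun u _ => abs_nonneg _).trans hμ
    positivity

end Transport

theorem wasserstein_lipschitz_in_weights_general [Fintype V] [Fintype E] [DecidableEq V]
    (src tgt : E → V) (hsc : StronglyConnected src tgt)
    (α : ℝ) (hα : α ∈ Set.Icc (0:ℝ) 1) (e : E)
    (Λ δ : ℝ) (hΛ : 0 < Λ) :
    ∃ C : ℝ, 0 < C ∧
      ∀ w1 w2 : E → ℝ,
        (∀ τ, Λ⁻¹ ≤ w1 τ ∧ w1 τ ≤ Λ) → (∀ τ, Λ⁻¹ ≤ w2 τ ∧ w2 τ ≤ Λ) →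
        (∀ τ, |w1 τ - w2 τ| ≤ δ) →
        |wasserstein src tgt w1 (lazyWalk src tgt w1 α (src e)) (lazyWalk src tgt w1 α (tgt e)) -
          wasserstein src tgt w2 (lazyWalk src tgt w2 α (src e)) (lazyWalk src tgt w2 α (tgt e))|
          ≤ C * _root_.enorm (w1 - w2) := by
  simp only [wasserstein_eq_optimalTransportCost]
  obtain ⟨N, hN⟩ := hsc.exists_forall_gdist_le
  obtain ⟨e', he'⟩ := hsc.exists_src_eq_tgt e
  refine ⟨Λ ^ 2 * (N + 1) * (1 + 4 * Fintype.card V * Fintype.card E), by positivity,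
    fun w₁ w₂ hw₁ hw₂ _ => ?_⟩
  set ε := _root_.enorm (w₁ - w₂)
  have hw : ∀ τ, |w₁ τ - w₂ τ| ≤ ε := abs_apply_le_enorm (w₁ - w₂)
  have hε : 0 ≤ ε := (abs_nonneg _).trans (hw e)
  have hlow₁ : ∀ τ, Λ⁻¹ ≤ w₁ τ := fun τ => (hw₁ τ).1
  have hlow₂ : ∀ τ, Λ⁻¹ ≤ w₂ τ := fun τ => (hw₂ τ).1
  have hpos₁ : ∀ τ, 0 < w₁ τ := fun τ => (inv_pos.2 hΛ).trans_le (hlow₁ τ)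
  have hpos₂ : ∀ τ, 0 < w₂ τ := fun τ => (inv_pos.2 hΛ).trans_le (hlow₂ τ)
  have hdist₁ : ∀ u v, 0 ≤ gdist src tgt w₁ u v ∧ gdist src tgt w₁ u v ≤ Λ * N := fun u v =>
    ⟨gdist_nonneg src tgt (fun τ => (hpos₁ τ).le) u v,
      hN hΛ.le (fun τ => (hpos₁ τ).le) (fun τ => (hw₁ τ).2) u v⟩
  have hdist₂ : ∀ u v, 0 ≤ gdist src tgt w₂ u v ∧ gdist src tgt w₂ u v ≤ Λ * N := fun u v =>
    ⟨gdist_nonneg src tgt (fun τ => (hpos₂ τ).le) u v,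
      hN hΛ.le (fun τ => (hpos₂ τ).le) (fun τ => (hw₂ τ).2) u v⟩
  calc _ ≤ Λ * ε * (Λ * N) + 2 * (Fintype.card V * (2 * Fintype.card E * Λ * ε)) * (Λ * N) :=
        abs_optimalTransportCost_sub_le hdist₁ hdist₂ (by positivity) (by positivity)
          (fun u v => abs_gdist_sub_le src tgt hΛ hε hlow₁ hlow₂ hw (hsc u v) (hdist₁ u v).2
            (hdist₂ u v).2)
          (and_congr (lazyWalk_mem_stdSimplex_congr src tgt hpos₁ hpos₂ hα rfl)
            (lazyWalk_mem_stdSimplex_congr src tgt hpos₁ hpos₂ hα he'))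
          (sum_abs_lazyWalk_sub_le src tgt hΛ hα hlow₁ hlow₂ hw rfl)
          (sum_abs_lazyWalk_sub_le src tgt hΛ hα hlow₁ hlow₂ hw he')
    _ = Λ ^ 2 * N * (1 + 4 * Fintype.card V * Fintype.card E) * ε := by ring
    _ ≤ _ := by gcongr; linarith

theorem wasserstein_lipschitz_in_weights [Fintype V] [Fintype E] [DecidableEq V]
    (src tgt : E → V) (hsc : StronglyConnected src tgt)
    (α : ℝ) (hα : α ∈ Set.Icc (0:ℝ) 1) (e : E)
    (Λ δ : ℝ) (hΛ : 0 < Λ) (hδ : 0 < δ) :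
    ∃ C : ℝ, 0 < C ∧
      ∀ w1 w2 : E → ℝ,
        (∀ τ, Λ⁻¹ ≤ w1 τ ∧ w1 τ ≤ Λ) → (∀ τ, Λ⁻¹ ≤ w2 τ ∧ w2 τ ≤ Λ) →
        (∀ τ, |w1 τ - w2 τ| ≤ δ) →
        |wasserstein src tgt w1 (lazyWalk src tgt w1 α (src e)) (lazyWalk src tgt w1 α (tgt e)) -
          wasserstein src tgt w2 (lazyWalk src tgt w2 α (src e)) (lazyWalk src tgt w2 α (tgt e))|
          ≤ C * _root_.enorm (w1 - w2) :=
  wasserstein_lipschitz_in_weights_general src tgt hsc α hα e Λ δ hΛ
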